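/- The Higman group H = ⟨a₀,a₁,a₂,a₃ | aᵢaᵢ₊₁aᵢ⁻¹ = aᵢ₊₁², mod 4⟩ admits no nontrivial homomorphism to any finite group whose order is a power of a prime p, for any prime p. (More generally it has no nontrivial finite quotients; the p-group case follows since in a finite p-group the relation x y x⁻¹ = y² forces orders to collapse cyclically.) -/

import Mathlib

def HigmanRel (m : ZMod 4 → ℕ) : Set (FreeGroup (ZMod 4)) :=
  {r | ∃ i : ZMod 4, r = FreeGroup.of i * FreeGroup.of (i+1) * (FreeGroup.of i)⁻¹ *
      (FreeGroup.of (i+1) ^ (m i))⁻¹}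

def HigmanLike (m : ZMod 4 → ℕ) : Type := PresentedGroup (HigmanRel m)

instance (m : ZMod 4 → ℕ) : Group (HigmanLike m) := by unfold HigmanLike; infer_instance

def higmanGen (m : ZMod 4 → ℕ) (i : ZMod 4) : HigmanLike m := PresentedGroup.of i

def Higman : Type := HigmanLike (fun _ => 2)

instance : Group Higman := by unfold Higman; infer_instance

def higmanA (i : ZMod 4) : Higman := higmanGen (fun _ => 2) i

/-!
If `x y x⁻¹ = y ^ m`, then conjugating by `x ^ k` sends `y` to `y ^ m ^ k`; with `k = orderOf x`
this gives `m ^ orderOf x ≡ 1 [MOD orderOf y]`. In a `p`-group with `y ≠ 1` both orders are powers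
of `p`, so reducing mod `p` and using Fermat (`m ^ p ^ a ≡ m`) yields `m ≡ 1 [MOD p]`, impossible
for `m = 2`. Hence every generator of the Higman group, being conjugate to its square by the
previous one, maps to `1`.
-/

theorem conj_pow_mul_conj_eq_pow_pow {G : Type*} [Group G] {x y : G} {m : ℕ}
    (h : x * y * x⁻¹ = y ^ m) (k : ℕ) : x ^ k * y * (x ^ k)⁻¹ = y ^ m ^ k := by
  induction k with
  | zero => simp
  | succ k ih =>
    calc x ^ (k + 1) * y * (x ^ (k + 1))⁻¹ = x * (x ^ k * y * (x ^ k)⁻¹) * x⁻¹ := by group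
      _ = (x * y * x⁻¹) ^ m ^ k := by rw [ih, conj_pow]
      _ = y ^ m ^ (k + 1) := by rw [h, ← pow_mul, pow_succ']

theorem pow_pow_orderOf_modEq_one {G : Type*} [Group G] {x y : G} {m : ℕ}
    (h : x * y * x⁻¹ = y ^ m) : m ^ orderOf x ≡ 1 [MOD orderOf y] := by
  rw [← pow_eq_pow_iff_modEq, pow_one, ← conj_pow_mul_conj_eq_pow_pow h, pow_orderOf_eq_one]
  group

theorem IsPGroup.natCast_eq_one_of_conj_eq_pow {p : ℕ} [Fact p.Prime] {G : Type*} [Group G]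
    (hG : IsPGroup p G) {x y : G} {m : ℕ} (h : x * y * x⁻¹ = y ^ m) (hy : y ≠ 1) :
    (m : ZMod p) = 1 := by
  obtain ⟨a, ha⟩ := (IsPGroup.iff_orderOf.mp hG) x
  obtain ⟨b, hb⟩ := (IsPGroup.iff_orderOf.mp hG) y
  have hb0 : b ≠ 0 := by
    rintro rfl
    exact hy (orderOf_eq_one_iff.mp (by simpa using hb))
  have hmod : m ^ p ^ a ≡ 1 [MOD p] :=
    ha ▸ (pow_pow_orderOf_modEq_one h).of_dvd (hb ▸ dvd_pow_self p hb0)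
  have := (ZMod.natCast_eq_natCast_iff _ _ _).mpr hmod
  push_cast at this
  rwa [ZMod.pow_card_pow] at this

theorem IsPGroup.eq_one_of_conj_eq_sq {p : ℕ} [Fact p.Prime] {G : Type*} [Group G]
    (hG : IsPGroup p G) {x y : G} (h : x * y * x⁻¹ = y ^ 2) : y = 1 := by
  by_contra hy
  have h21 : ((2 : ℕ) : ZMod p) = 1 := hG.natCast_eq_one_of_conj_eq_pow h hy
  exact one_ne_zero (by linear_combination h21 : (1 : ZMod p) = 0)

theorem higmanA_conj (i : ZMod 4) :
    higmanA i * higmanA (i + 1) * (higmanA i)⁻¹ = higmanA (i + 1) ^ 2 := by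
  rw [← mul_inv_eq_one]
  exact PresentedGroup.one_of_mem ⟨i, rfl⟩

/-- The Higman group admits no nontrivial homomorphism to any finite group of prime
power order. -/
theorem stmt_14 (p : ℕ) (hp : p.Prime) (G : Type) [Group G] [Fintype G]
    (n : ℕ) (hG : Fintype.card G = p ^ n) (f : Higman →* G) :
    ∀ x : Higman, f x = 1 := by
  have : Fact p.Prime := ⟨hp⟩
  have hpG : IsPGroup p G := IsPGroup.of_card (by rwa [Nat.card_eq_fintype_card])
  have hgen (i : ZMod 4) : f (higmanA i) = 1 := by
    simpa using hpG.eq_one_of_conj_eq_sq (by simpa using congrArg f (higmanA_conj (i - 1)))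
  intro x
  exact PresentedGroup.generated_by _ f.ker hgen x
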